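/- arXiv:1312.7248 — 2 statements merged into one kernel-verified Lean document; each statement's English description precedes it below -/
import Mathlib

section
/- Let s(z) = γ·∏_{i=1}^{m₁}(z−a_i) / ∏_{j=1}^{m₂}(z−b_j) with γ ≠ 0 and pairwise distinct real numbers a₁,…,a_{m₁}, b₁,…,b_{m₂} (in particular a_i ≠ b_j). For c ∈ ℝ let η_c(s) denote the number of zeros and poles of s strictly greater than c, and set π_i := (1 − (−1)^{η_{a_i}(s)}·sgn(γ))/2 ∈ {0,1} and κ_j := (1 + (−1)^{η_{b_j}(s)}·sgn(γ))/2 ∈ {0,1}. Then: (1) π_i = 1 if and only if lim_{z→a_i} s(z)/(z−a_i) < 0, and κ_j = 1 if and only if lim_{z→b_j} (z−b_j)s(z) > 0; (2) the rational function s₀(z) := γ·∏_i (z−a_i)^{1−2π_i} / ∏_j (z−b_j)^{1−2κ_j} restricts on ℂ∖ℝ to a Nevanlinna function; (3) s = ψ·s₀, where ψ(z) := ∏_i (z−a_i)^{2π_i} / ∏_j (z−b_j)^{2κ_j} is nonnegative on ℝ (outside its poles). -/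
open MeasureTheory Filter Set Topology

noncomputable section

/-- A (scalar) Nevanlinna function: holomorphic off the reals, symmetric with respect to
complex conjugation, and mapping the upper half-plane into its closure. -/
structure IsNevanlinna (Q : ℂ → ℂ) : Prop where
  holo : DifferentiableOn ℂ Q {z : ℂ | z.im ≠ 0}
  symm : ∀ z : ℂ, z.im ≠ 0 → Q ((starRingEnd ℂ) z) = (starRingEnd ℂ) (Q z)
  herglotz : ∀ z : ℂ, z.im ≠ 0 → 0 ≤ (Q z).im * z.im

/-- `Q` extends holomorphically across the real point `x` (i.e. `x ∈ ρ(Q)`). -/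
def HoloAtReal (Q : ℂ → ℂ) (x : ℝ) : Prop :=
  ∃ (U : Set ℂ) (G : ℂ → ℂ), IsOpen U ∧ (x : ℂ) ∈ U ∧
    DifferentiableOn ℂ G U ∧ ∀ z ∈ U, z.im ≠ 0 → G z = Q z

/-- The finite part of the set `σ(Q) = ℝ ∖ ρ(Q)`. -/
def nevSpec (Q : ℂ → ℂ) : Set ℝ := {x : ℝ | ¬ HoloAtReal Q x}

/-- Boundary value of `Q` at a real point, obtained as limit from the upper half-plane
(junk value if the limit does not exist). -/
def nevBdry (Q : ℂ → ℂ) (x : ℝ) : ℝ :=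
  (limUnder (nhdsWithin (0 : ℝ) (Set.Ioi 0))
    (fun y : ℝ => Q ((x : ℂ) + (y : ℂ) * Complex.I))).re

/-- The Herglotz–Nevanlinna integral representation of `Q` with data `(α, β, σ)`. -/
def IsNevRep (Q : ℂ → ℂ) (α β : ℝ) (σ : Measure ℝ) : Prop :=
  0 ≤ β ∧ (∫⁻ t, ENNReal.ofReal ((1 + t ^ 2)⁻¹) ∂σ) ≠ ⊤ ∧
    ∀ z : ℂ, z.im ≠ 0 →
      Q z = (α : ℂ) + (β : ℂ) * z +
        ∫ t, (((t : ℂ) - z)⁻¹ - (t : ℂ) / (1 + (t : ℂ) ^ 2)) ∂σ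

/-- Stolz sector at a real boundary point. -/
def upperSector (ξ α : ℝ) : Set ℂ := {z : ℂ | 0 < z.im ∧ α * |z.re - ξ| ≤ z.im}

/-- Nontangential (sectorial) limit of `f` at the real point `ξ`. -/
def SecLim (f : ℂ → ℂ) (ξ : ℝ) (L : ℂ) : Prop :=
  ∀ α : ℝ, 0 < α → Tendsto f (nhdsWithin (ξ : ℂ) (upperSector ξ α)) (nhds L)

/-- Nontangential limit `+∞` (of the real parts) at the real point `ξ`. -/
def SecLimTop (f : ℂ → ℂ) (ξ : ℝ) : Prop :=
  ∀ α : ℝ, 0 < α →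
    Tendsto (fun z => (f z).re) (nhdsWithin (ξ : ℂ) (upperSector ξ α)) atTop

/-- Nontangential limit `-∞` (of the real parts) at the real point `ξ`. -/
def SecLimBot (f : ℂ → ℂ) (ξ : ℝ) : Prop :=
  ∀ α : ℝ, 0 < α →
    Tendsto (fun z => (f z).re) (nhdsWithin (ξ : ℂ) (upperSector ξ α)) atBot

/-- The sectorial approach filter to `∞` in the upper half-plane. -/
def inftySector (α : ℝ) : Filter ℂ :=
  (Filter.comap (fun z : ℂ => ‖z‖) Filter.atTop) ⊓
    Filter.principal {z : ℂ | 0 < z.im ∧ α * |z.re| ≤ z.im}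

/-- Sectorial limit of `f` at `∞`. -/
def SecLimInfty (f : ℂ → ℂ) (L : ℂ) : Prop :=
  ∀ α : ℝ, 0 < α → Tendsto f (inftySector α) (nhds L)

/-- The Kac–Donoghue class `N(ξ,1)`, `ξ ∈ ℝ`. -/
def InKacClass (Q : ℂ → ℂ) (ξ : ℝ) : Prop :=
  IsNevanlinna Q ∧
    MeasureTheory.IntegrableOn
      (fun y : ℝ => (Q ((ξ : ℂ) + (y : ℂ) * Complex.I)).im / y) (Set.Ioc 0 1)

/-- The Kac class `N(∞,1)`. -/
def InKacClassInfty (Q : ℂ → ℂ) : Prop :=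
  IsNevanlinna Q ∧
    MeasureTheory.IntegrableOn
      (fun y : ℝ => (Q ((y : ℂ) * Complex.I)).im / y) (Set.Ici 1)

/-- `Q` extends holomorphically across `x` with value `0` at `x` (a real zero of `Q`). -/
def RealZeroOf (Q : ℂ → ℂ) (x : ℝ) : Prop :=
  ∃ (U : Set ℂ) (G : ℂ → ℂ), IsOpen U ∧ (x : ℂ) ∈ U ∧
    DifferentiableOn ℂ G U ∧ (∀ z ∈ U, z.im ≠ 0 → G z = Q z) ∧ G (x : ℂ) = 0

/-- `Q` has an isolated pole at the real point `x`. -/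
def IsolatedPoleAtReal (Q : ℂ → ℂ) (x : ℝ) : Prop :=
  ∃ (U : Set ℂ) (G : ℂ → ℂ), IsOpen U ∧ (x : ℂ) ∈ U ∧
    DifferentiableOn ℂ G (U \ {(x : ℂ)}) ∧ (∀ z ∈ U, z.im ≠ 0 → G z = Q z) ∧
    Tendsto (fun z => ‖G z‖) (nhdsWithin (x : ℂ) {(x : ℂ)}ᶜ) atTop

/-- The Nevanlinna kernel of `Q`. -/
def nevKernel (Q : ℂ → ℂ) (z w : ℂ) : ℂ :=
  (Q z - (starRingEnd ℂ) (Q w)) / (z - (starRingEnd ℂ) w)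

/-- The value of the Hermitian form attached to the kernel `K` at the sample points `z`
on the coefficient vector `v`. -/
def hermFormRe (K : ℂ → ℂ → ℂ) {n : ℕ} (z v : Fin n → ℂ) : ℝ :=
  (∑ i, ∑ j, v i * (starRingEnd ℂ) (v j) * K (z i) (z j)).re

/-- The kernel `K` has at most `κ` negative squares on `dom`: every `κ+1`-dimensional
space of coefficient vectors contains a nonzero vector on which the Hermitian form
is nonnegative. -/
def NegSquaresLE (K : ℂ → ℂ → ℂ) (dom : Set ℂ) (κ : ℕ) : Prop :=
  ∀ (n : ℕ) (z : Fin n → ℂ), (∀ i, z i ∈ dom) →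
    ∀ c : Fin (κ + 1) → (Fin n → ℂ), LinearIndependent ℂ c →
      ∃ a : Fin (κ + 1) → ℂ, a ≠ 0 ∧ 0 ≤ hermFormRe K z (∑ j, a j • c j)

/-- The kernel `K` has exactly `κ` negative squares on `dom`. -/
def NegSquaresEq (K : ℂ → ℂ → ℂ) (dom : Set ℂ) (κ : ℕ) : Prop :=
  NegSquaresLE K dom κ ∧ ∀ κ' : ℕ, κ' < κ → ¬ NegSquaresLE K dom κ'

/-- The class `N_κ` of generalized Nevanlinna functions: symmetric functions, meromorphic
off the reals, whose Nevanlinna kernel has exactly `κ` negative squares. -/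
structure IsGenNevanlinna (Q : ℂ → ℂ) (κ : ℕ) : Prop where
  mero : MeromorphicOn Q {z : ℂ | z.im ≠ 0}
  symm : ∀ z : ℂ, z.im ≠ 0 → AnalyticAt ℂ Q z →
    Q ((starRingEnd ℂ) z) = (starRingEnd ℂ) (Q z)
  negsq : NegSquaresEq (nevKernel Q) {z : ℂ | 0 < z.im ∧ AnalyticAt ℂ Q z} κ

/-- Evaluation of a real rational function at a complex point (junk at poles). -/
def ratEvalC (r : RatFunc ℝ) (z : ℂ) : ℂ :=
  Polynomial.eval₂ (algebraMap ℝ ℂ) z r.num / Polynomial.eval₂ (algebraMap ℝ ℂ) z r.denom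

/-- Evaluation of a real rational function at a real point (junk at poles). -/
def ratEvalR (r : RatFunc ℝ) (x : ℝ) : ℝ :=
  Polynomial.eval x r.num / Polynomial.eval x r.denom

/-- `r` is finite (has no pole) at the real point `x`. -/
def RatFiniteAt (r : RatFunc ℝ) (x : ℝ) : Prop := Polynomial.eval x r.denom ≠ 0

/-- The degree of a rational function, `max (deg num) (deg denom)`. -/
def ratDeg (r : RatFunc ℝ) : ℕ := max r.num.natDegree r.denom.natDegree

/-- `r` has a pole at `∞`. -/
def RatPoleAtInfty (r : RatFunc ℝ) : Prop := r.denom.natDegree < r.num.natDegree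

/-- The limit value of `r` at `∞` along `ℝ` (junk value `0` if `r` has a pole at `∞`). -/
def ratValInfty (r : RatFunc ℝ) : ℝ :=
  if r.num.natDegree = r.denom.natDegree then r.num.leadingCoeff / r.denom.leadingCoeff
  else 0

/-- `0 ≤ r ≤ ∞` holds on `S` (together with `∞` if `inftyIn` holds, interpreting `r(∞)` as
the limit of `r` along `ℝ`) except at finitely many exceptional points, each of which is an
isolated point of `S` satisfying the predicate `mass`. -/
def RatNonnegOnSpecExceptPoles (r : RatFunc ℝ) (S : Set ℝ) (mass : ℝ → Prop)
    (inftyIn : Prop) : Prop :=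
  {x : ℝ | x ∈ S ∧ RatFiniteAt r x ∧ ratEvalR r x < 0}.Finite ∧
  (∀ x ∈ S, RatFiniteAt r x → ratEvalR r x < 0 →
      (∃ ε > 0, S ∩ Set.Ioo (x - ε) (x + ε) = {x}) ∧ mass x) ∧
  (inftyIn → ¬ RatPoleAtInfty r → ratValInfty r < 0 → Bornology.IsBounded S)

/-- Linear factor `z - c`, with `c ∈ ℝ ∪ {∞}` (where `none` codes `∞`) and the
convention `z - ∞ = 1`. -/
def linC : Option ℝ → ℂ → ℂ
  | none, _ => 1
  | some a, z => z - (a : ℂ)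

/-- Real version of `linC`. -/
def linR : Option ℝ → ℝ → ℝ
  | none, _ => 1
  | some a, x => x - a

/-- The degree-one symmetric rational function `γ (z-a)/(z-b)`, `a, b ∈ ℝ ∪ {∞}`. -/
def sFun (γ : ℝ) (ao bo : Option ℝ) (z : ℂ) : ℂ := (γ : ℂ) * linC ao z / linC bo z

/-- Real values of `sFun`. -/
def sFunR (γ : ℝ) (ao bo : Option ℝ) (x : ℝ) : ℝ := γ * linR ao x / linR bo x

/-- `sFun γ ao bo` is finite at the real point `x`. -/
def sFiniteAt (bo : Option ℝ) (x : ℝ) : Prop := ∀ p : ℝ, bo = some p → x ≠ p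

/-- `sFun γ ao bo` has a pole at `∞`. -/
def sPoleAtInfty (ao bo : Option ℝ) : Prop := bo = none ∧ ao ≠ none

/-- Limit value of `sFun γ ao bo` at `∞`. -/
def sValInfty (γ : ℝ) (ao : Option ℝ) : ℝ := if ao = none then 0 else γ

/-- `0 ≤ s ≤ ∞` on `S` (together with `∞` if `inftyIn` holds) except at finitely many
exceptional points, for the degree-one rational function `s = sFun γ ao bo`. -/
def SNonnegOnSpecExceptPoles (γ : ℝ) (ao bo : Option ℝ) (S : Set ℝ) (mass : ℝ → Prop)
    (inftyIn : Prop) : Prop :=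
  {x : ℝ | x ∈ S ∧ sFiniteAt bo x ∧ sFunR γ ao bo x < 0}.Finite ∧
  (∀ x ∈ S, sFiniteAt bo x → sFunR γ ao bo x < 0 →
      (∃ ε > 0, S ∩ Set.Ioo (x - ε) (x + ε) = {x}) ∧ mass x) ∧
  (inftyIn → ¬ sPoleAtInfty ao bo → sValInfty γ ao < 0 → Bornology.IsBounded S)

/-!
At a simple zero or pole `c` of `s` the residue-type limit has sign `sgn γ · (-1)^{η_c(s)}`,
since each factor `c - d` is negative exactly for the `d > c`. Hence the exponents
`1 - 2πᵢ` and `-(1 - 2κⱼ)` both equal `εₖ = sgn γ · (-1)^{η}`: listing zeros and poles in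
decreasing order, `s₀ = γ ∏ (z - pₖ)^{εₖ}` with `ε` alternating and starting at `sgn γ`.
For `Im z > 0` the angles `θₖ = arg (z - pₖ) ∈ (0, π)` decrease along this list, so
`arg s₀ = sgn γ · (θ₁ - θ₂ + θ₃ - ⋯)` modulo `2π`, and the alternating sum lies in `[0, π]`;
therefore `Im s₀ ≥ 0`, and symmetry gives the lower half-plane. The factor `ψ` is a product
of even powers.
-/

open Finset

theorem strictMono_div_sqrt_sq_add_sq {y : ℝ} (hy : y ≠ 0) :
    StrictMono fun t : ℝ => t / √(t ^ 2 + y ^ 2) := by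
  intro u v huv
  have hy2 : 0 < y ^ 2 := by positivity
  obtain ⟨hA, hA2⟩ : 0 < √(u ^ 2 + y ^ 2) ∧ √(u ^ 2 + y ^ 2) ^ 2 = u ^ 2 + y ^ 2 :=
    ⟨by positivity, Real.sq_sqrt (by positivity)⟩
  obtain ⟨hB, hB2⟩ : 0 < √(v ^ 2 + y ^ 2) ∧ √(v ^ 2 + y ^ 2) ^ 2 = v ^ 2 + y ^ 2 :=
    ⟨by positivity, Real.sq_sqrt (by positivity)⟩
  set A := √(u ^ 2 + y ^ 2)
  set B := √(v ^ 2 + y ^ 2)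
  have hAB : u * v < A * B := by
    refine (abs_lt_of_sq_lt_sq' ?_ (by positivity)).2
    rw [mul_pow, mul_pow, hA2, hB2]
    nlinarith [sq_nonneg u, sq_nonneg v]
  have key : (v * A - u * B) * (A + B) = (v - u) * (A * B - u * v + y ^ 2) := by
    linear_combination v * hA2 - u * hB2
  rw [div_lt_div_iff₀ hA hB]
  nlinarith [mul_pos (sub_pos.2 huv) (by linarith : 0 < A * B - u * v + y ^ 2)]

theorem Complex.strictMono_arg_sub_ofReal {z : ℂ} (hz : 0 < z.im) :
    StrictMono fun c : ℝ => Complex.arg (z - c) := by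
  intro c₁ c₂ hc
  have him : ∀ c : ℝ, 0 < (z - c).im := fun c => by simpa using hz
  simp only [Complex.arg_of_im_pos (him _)]
  refine Real.arccos_lt_arccos (neg_le_of_abs_le (Complex.abs_re_div_norm_le_one _)) ?_
    (le_of_abs_le (Complex.abs_re_div_norm_le_one _))
  simp only [Complex.norm_eq_sqrt_sq_add_sq, Complex.sub_re, Complex.sub_im, Complex.ofReal_re,
    Complex.ofReal_im, sub_zero]
  exact strictMono_div_sqrt_sq_add_sq hz.ne' (by linarith)

theorem sum_neg_one_pow_card_gt_mul_mem_Icc {ι : Type*} [DecidableEq ι] (s : Finset ι)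
    (θ : ι → ℝ) (hθ : Set.InjOn θ s) (hnonneg : ∀ k ∈ s, 0 ≤ θ k) {B : ℝ} (hB : 0 ≤ B)
    (hle : ∀ k ∈ s, θ k ≤ B) :
    ∑ k ∈ s, (-1) ^ #{l ∈ s | θ k < θ l} * θ k ∈ Set.Icc 0 B := by
  induction s using Finset.induction_on_max_value θ generalizing B with
  | empty => simpa using hB
  | insert a s ha hmax ih =>
    have hlt : ∀ k ∈ s, θ k < θ a := fun k hk => (hmax k hk).lt_of_ne fun h =>
      ha (hθ (mem_insert_of_mem hk) (mem_insert_self a s) h ▸ hk)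
    have hcard : ∀ k ∈ s, #{l ∈ insert a s | θ k < θ l} = #{l ∈ s | θ k < θ l} + 1 := by
      intro k hk
      rw [filter_insert, if_pos (hlt k hk), card_insert_of_notMem (by simp [ha])]
    have htop : #{l ∈ insert a s | θ a < θ l} = 0 := by
      simpa using fun l hl => (hmax l hl).not_gt
    have hsplit : ∑ k ∈ insert a s, (-1) ^ #{l ∈ insert a s | θ k < θ l} * θ k
        = θ a - ∑ k ∈ s, (-1) ^ #{l ∈ s | θ k < θ l} * θ k := by
      rw [sum_insert ha, htop, pow_zero, one_mul, sub_eq_add_neg, ← sum_neg_distrib]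
      exact congrArg _ (sum_congr rfl fun k hk => by rw [hcard k hk, pow_succ]; ring)
    obtain ⟨h0, hθa⟩ := ih (hθ.mono (Finset.subset_insert a s))
      (fun k hk => hnonneg k (mem_insert_of_mem hk)) (hnonneg a (mem_insert_self a s))
      (fun k hk => (hlt k hk).le)
    rw [hsplit]
    exact ⟨by linarith, by linarith [hle a (mem_insert_self a s)]⟩

theorem Complex.prod_zpow_eq_norm_mul_exp {ι : Type*} (s : Finset ι) (w : ι → ℂ) (e : ι → ℤ) :
    ∏ k ∈ s, w k ^ e k =
      ((∏ k ∈ s, ‖w k‖ ^ e k : ℝ) : ℂ) * Complex.exp ((∑ k ∈ s, e k * arg (w k) : ℝ) * I) := by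
  have hfactor : ∀ k, w k ^ e k = (‖w k‖ : ℂ) ^ e k * Complex.exp ((e k * arg (w k) : ℝ) * I) := by
    intro k
    conv_lhs => rw [← Complex.norm_mul_exp_arg_mul_I (w k)]
    rw [mul_zpow, ← Complex.exp_int_mul]
    push_cast
    ring_nf
  simp only [hfactor, prod_mul_distrib, ← Complex.exp_sum]
  push_cast [sum_mul]
  rfl

theorem Complex.im_ofReal_mul_ofReal_mul_exp (γ r t : ℝ) :
    ((γ : ℂ) * ((r : ℂ) * Complex.exp (t * I))).im = γ * r * Real.sin t := by
  rw [← mul_assoc, ← Complex.ofReal_mul, Complex.im_ofReal_mul, Complex.exp_ofReal_mul_I_im]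

theorem im_ofReal_mul_prod_sub_zpow_nonneg {ι : Type*} [Fintype ι] {P : ι → ℝ}
    (hP : Function.Injective P) {γ : ℝ} {σ : ℤ} (hσ : IsUnit σ) (hσγ : 0 ≤ σ * γ)
    {z : ℂ} (hz : 0 < z.im) :
    0 ≤ ((γ : ℂ) * ∏ k, (z - P k) ^ ((-1) ^ #{l | P k < P l} * σ)).im := by
  classical
  set θ : ι → ℝ := fun k => Complex.arg (z - P k)
  have hθ := Complex.strictMono_arg_sub_ofReal hz
  have hsum : ∑ k, (((-1) ^ #{l | P k < P l} * σ : ℤ) : ℝ) * θ k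
      = σ * ∑ k, (-1) ^ #{l | θ k < θ l} * θ k := by
    rw [mul_sum]
    refine sum_congr rfl fun k _ => ?_
    simp only [θ, hθ.lt_iff_lt]
    push_cast
    ring
  obtain ⟨hT0, hTpi⟩ := sum_neg_one_pow_card_gt_mul_mem_Icc univ θ (hθ.injective.comp hP).injOn
    (fun k _ => Complex.arg_nonneg_iff.2 (by simpa using hz.le)) Real.pi_pos.le
    (fun k _ => Complex.arg_le_pi _)
  have hsin := Real.sin_nonneg_of_nonneg_of_le_pi hT0 hTpi
  have hnorm : 0 ≤ ∏ k, ‖z - P k‖ ^ ((-1) ^ #{l | P k < P l} * σ) :=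
    prod_nonneg fun k _ => zpow_nonneg (norm_nonneg _) _
  rw [Complex.prod_zpow_eq_norm_mul_exp, Complex.im_ofReal_mul_ofReal_mul_exp, hsum]
  rcases Int.isUnit_iff.1 hσ with rfl | rfl
  · simp only [Int.cast_one, mul_one, one_mul] at hσγ ⊢
    positivity
  · simp only [Int.cast_neg, Int.cast_one, mul_neg, mul_one, neg_mul, one_mul, Real.sin_neg]
      at hσγ hnorm ⊢
    nlinarith [mul_nonneg hσγ (mul_nonneg hnorm hsin)]

theorem IsNevanlinna.of_im_nonneg {Q : ℂ → ℂ} (holo : DifferentiableOn ℂ Q {z : ℂ | z.im ≠ 0})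
    (symm : ∀ z : ℂ, z.im ≠ 0 → Q ((starRingEnd ℂ) z) = (starRingEnd ℂ) (Q z))
    (hupper : ∀ z : ℂ, 0 < z.im → 0 ≤ (Q z).im) : IsNevanlinna Q where
  holo := holo
  symm := symm
  herglotz z hz := by
    rcases hz.lt_or_gt with hneg | hpos
    · have hconj : 0 < ((starRingEnd ℂ) z).im := by simpa using hneg
      have := hupper _ hconj
      rw [symm z hz, Complex.conj_im] at this
      nlinarith
    · exact mul_nonneg (hupper z hpos) hpos.le

theorem isNevanlinna_ofReal_mul_prod_sub_zpow {ι : Type*} [Fintype ι] {P : ι → ℝ}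
    (hP : Function.Injective P) {γ : ℝ} {σ : ℤ} (hσ : IsUnit σ) (hσγ : 0 ≤ σ * γ) :
    IsNevanlinna fun z : ℂ => (γ : ℂ) * ∏ k, (z - P k) ^ ((-1) ^ #{l | P k < P l} * σ) := by
  refine .of_im_nonneg (fun z hz => ?_) (fun z _ => ?_)
    (fun z hz => im_ofReal_mul_prod_sub_zpow_nonneg hP hσ hσγ hz)
  · have hne : ∀ c : ℝ, z - c ≠ 0 := fun c h => hz (by simpa using congrArg Complex.im h)
    fun_prop (disch := exact .inl (hne _))
  · simp [map_prod, map_zpow₀]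

theorem Fintype.card_filter_sum_type {α β : Type*} [Fintype α] [Fintype β]
    (p : α ⊕ β → Prop) [DecidablePred p] :
    #{x | p x} = #{a | p (.inl a)} + #{b | p (.inr b)} := by
  simp only [card_filter, Fintype.sum_sum_type]

theorem neg_one_pow_card_mul_prod_sub_pos {ι : Type*} (s : Finset ι) (f : ι → ℝ) {x : ℝ}
    (hx : ∀ k ∈ s, f k ≠ x) : 0 < (-1) ^ #{k ∈ s | x < f k} * ∏ k ∈ s, (x - f k) := by
  rw [← prod_const, prod_filter, ← prod_mul_distrib]
  refine prod_pos fun k hk => ?_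
  split_ifs with h
  · linarith
  · linarith [lt_of_le_of_ne (not_lt.1 h) (hx k hk)]

theorem neg_one_pow_mul_mul_prod_div_prod_sub_pos {ι κ : Type*} {σ γ : ℝ} (hσγ : 0 < σ * γ)
    (s : Finset ι) (t : Finset κ) (f : ι → ℝ) (g : κ → ℝ) {x : ℝ} (hf : ∀ k ∈ s, f k ≠ x)
    (hg : ∀ k ∈ t, g k ≠ x) :
    0 < (-1) ^ (#{k ∈ s | x < f k} + #{k ∈ t | x < g k}) * σ *
      (γ * (∏ k ∈ s, (x - f k)) / ∏ k ∈ t, (x - g k)) := by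
  have hnum := neg_one_pow_card_mul_prod_sub_pos s f hf
  have hden := inv_pos.2 (neg_one_pow_card_mul_prod_sub_pos t g hg)
  rw [mul_inv, ← inv_pow, inv_neg_one] at hden
  exact (mul_pos (mul_pos hσγ hnum) hden).trans_eq (by ring)

theorem tendsto_mul_prod_div_sub_mul_prod {ι κ : Type*} [Fintype ι] [DecidableEq ι] [Fintype κ]
    (γ : ℝ) (a : ι → ℝ) (b : κ → ℝ) (i : ι) (hb : ∀ j, b j ≠ a i) :
    Tendsto (fun x => γ * (∏ i', (x - a i')) / ((x - a i) * ∏ j, (x - b j))) (𝓝[≠] a i)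
      (𝓝 (γ * (∏ i' ∈ univ.erase i, (a i - a i')) / ∏ j, (a i - b j))) := by
  have hcont : ContinuousAt
      (fun x => γ * (∏ i' ∈ univ.erase i, (x - a i')) / ∏ j, (x - b j)) (a i) := by
    fun_prop (disch := exact prod_ne_zero_iff.2 fun j _ => sub_ne_zero.2 (hb j).symm)
  refine (hcont.tendsto.mono_left nhdsWithin_le_nhds).congr' ?_
  filter_upwards [self_mem_nhdsWithin] with x hx
  rw [← mul_prod_erase univ _ (mem_univ i), mul_left_comm,
    mul_div_mul_left _ _ (sub_ne_zero.2 hx)]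

theorem tendsto_sub_mul_mul_prod_div_prod {ι κ : Type*} [Fintype ι] [Fintype κ] [DecidableEq κ]
    (γ : ℝ) (a : ι → ℝ) (b : κ → ℝ) (j : κ) (hb : ∀ j' ≠ j, b j' ≠ b j) :
    Tendsto (fun x => (x - b j) * (γ * (∏ i, (x - a i)) / ∏ j', (x - b j'))) (𝓝[≠] b j)
      (𝓝 (γ * (∏ i, (b j - a i)) / ∏ j' ∈ univ.erase j, (b j - b j'))) := by
  have hden : ∏ j' ∈ univ.erase j, (b j - b j') ≠ 0 :=
    prod_ne_zero_iff.2 fun j' hj' => sub_ne_zero.2 (hb j' (ne_of_mem_erase hj')).symm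
  have hcont : ContinuousAt
      (fun x => γ * (∏ i, (x - a i)) / ∏ j' ∈ univ.erase j, (x - b j')) (b j) := by
    fun_prop (disch := exact hden)
  refine (hcont.tendsto.mono_left nhdsWithin_le_nhds).congr' ?_
  filter_upwards [self_mem_nhdsWithin] with x hx
  rw [← mul_prod_erase univ _ (mem_univ j), ← mul_div_assoc,
    mul_div_mul_left _ _ (sub_ne_zero.2 hx)]

theorem Filter.Tendsto.exists_and_tendsto_iff {α β : Type*} [TopologicalSpace β] [T2Space β]
    {l : Filter α} [l.NeBot] {f : α → β} {b : β} (h : Tendsto f l (𝓝 b)) {p : β → Prop} :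
    (∃ c, p c ∧ Tendsto f l (𝓝 c)) ↔ p b :=
  ⟨fun ⟨_, hc, hfc⟩ => tendsto_nhds_unique hfc h ▸ hc, fun hb => ⟨b, hb, h⟩⟩

theorem Int.one_sub_ediv_two_eq_one_iff_of_mul_pos {u : ℤ} (hu : IsUnit u) {L : ℝ}
    (h : 0 < u * L) : (1 - u) / 2 = 1 ↔ L < 0 := by
  rcases Int.isUnit_iff.1 hu with rfl | rfl <;> norm_num at h ⊢ <;> linarith

theorem Int.one_add_ediv_two_eq_one_iff_of_mul_pos {u : ℤ} (hu : IsUnit u) {L : ℝ}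
    (h : 0 < u * L) : (1 + u) / 2 = 1 ↔ 0 < L := by
  rcases Int.isUnit_iff.1 hu with rfl | rfl <;> norm_num at h ⊢ <;> linarith

theorem Int.one_sub_two_mul_one_sub_ediv_two {u : ℤ} (hu : IsUnit u) :
    1 - 2 * ((1 - u) / 2) = u := by
  rcases Int.isUnit_iff.1 hu with rfl | rfl <;> rfl

theorem Int.one_sub_two_mul_one_add_ediv_two {u : ℤ} (hu : IsUnit u) :
    1 - 2 * ((1 + u) / 2) = -u := by
  rcases Int.isUnit_iff.1 hu with rfl | rfl <;> rfl

theorem one_sub_ediv_two_eq_one_iff_exists_neg_tendsto {ι κ : Type*} [Fintype ι] [DecidableEq ι]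
    [Fintype κ] {γ : ℝ} {σ : ℤ} (hσ : IsUnit σ) (hσγ : 0 < σ * γ) (a : ι → ℝ) (b : κ → ℝ)
    (i : ι) (ha : ∀ i' ≠ i, a i' ≠ a i) (hb : ∀ j, b j ≠ a i) :
    (1 - (-1) ^ (#{i' | a i < a i'} + #{j | a i < b j}) * σ) / 2 = 1 ↔
      ∃ L, L < 0 ∧ Tendsto (fun x => γ * (∏ i', (x - a i')) / ((x - a i) * ∏ j, (x - b j)))
        (𝓝[≠] a i) (𝓝 L) := by
  have hsign := neg_one_pow_mul_mul_prod_div_prod_sub_pos hσγ (univ.erase i) univ a b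
    (fun i' hi' => ha i' (ne_of_mem_erase hi')) (fun j _ => hb j)
  rw [filter_erase, erase_eq_of_notMem (by simp)] at hsign
  rw [(tendsto_mul_prod_div_sub_mul_prod γ a b i hb).exists_and_tendsto_iff]
  exact Int.one_sub_ediv_two_eq_one_iff_of_mul_pos ((isUnit_neg_one.pow _).mul hσ)
    (by exact_mod_cast hsign)

theorem one_add_ediv_two_eq_one_iff_exists_pos_tendsto {ι κ : Type*} [Fintype ι] [Fintype κ]
    [DecidableEq κ] {γ : ℝ} {σ : ℤ} (hσ : IsUnit σ) (hσγ : 0 < σ * γ) (a : ι → ℝ) (b : κ → ℝ)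
    (j : κ) (ha : ∀ i, a i ≠ b j) (hb : ∀ j' ≠ j, b j' ≠ b j) :
    (1 + (-1) ^ (#{i | b j < a i} + #{j' | b j < b j'}) * σ) / 2 = 1 ↔
      ∃ L, 0 < L ∧ Tendsto (fun x => (x - b j) * (γ * (∏ i, (x - a i)) / ∏ j', (x - b j')))
        (𝓝[≠] b j) (𝓝 L) := by
  have hsign := neg_one_pow_mul_mul_prod_div_prod_sub_pos hσγ univ (univ.erase j) a b
    (fun i _ => ha i) (fun j' hj' => hb j' (ne_of_mem_erase hj'))
  rw [filter_erase, erase_eq_of_notMem (by simp)] at hsign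
  rw [(tendsto_sub_mul_mul_prod_div_prod γ a b j hb).exists_and_tendsto_iff]
  exact Int.one_add_ediv_two_eq_one_iff_of_mul_pos ((isUnit_neg_one.pow _).mul hσ)
    (by exact_mod_cast hsign)

theorem mul_prod_div_prod_eq_mul_zpow {ι κ K : Type*} [Field K] (s : Finset ι) (t : Finset κ)
    (γ : K) (u : ι → K) (v : κ → K) (e : ι → ℤ) (f : κ → ℤ) :
    γ * (∏ i ∈ s, u i) / ∏ j ∈ t, v j =
      ((∏ i ∈ s, u i ^ e i) / ∏ j ∈ t, v j ^ f j) *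
        (γ * (∏ i ∈ s, u i ^ (1 - e i)) / ∏ j ∈ t, v j ^ (1 - f j)) := by
  have hsplit : ∀ (x : K) (n : ℤ), x ^ n * x ^ (1 - n) = x := fun x n => by
    rw [← zpow_add' (.inr (.inl (by omega))), add_sub_cancel, zpow_one]
  rw [div_mul_div_comm, mul_left_comm, ← prod_mul_distrib, ← prod_mul_distrib]
  simp only [hsplit]

/-- canonical factorization of a simple symmetric rational function
`s(z) = γ ∏ (z - aᵢ) / ∏ (z - bⱼ)` with pairwise distinct real zeros and poles.  With
`η_c(s)` the number of zeros and poles of `s` greater than `c`, and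
`πᵢ = (1 - (-1)^{η_{aᵢ}} sgn γ)/2`, `κⱼ = (1 + (-1)^{η_{bⱼ}} sgn γ)/2`, one has:
`πᵢ = 1` iff `lim_{z→aᵢ} s(z)/(z-aᵢ) < 0`, `κⱼ = 1` iff `lim_{z→bⱼ} (z-bⱼ)s(z) > 0`,
`s₀ := γ ∏ (z-aᵢ)^{1-2πᵢ} / ∏ (z-bⱼ)^{1-2κⱼ}` is a Nevanlinna function,
`ψ := ∏ (z-aᵢ)^{2πᵢ} / ∏ (z-bⱼ)^{2κⱼ}` is nonnegative on `ℝ`, and `s = ψ s₀`. -/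
theorem statement12 (γ : ℝ) (hγ : γ ≠ 0) (m₁ m₂ : ℕ)
    (a : Fin m₁ → ℝ) (b : Fin m₂ → ℝ)
    (hdistinct : Function.Injective (Sum.elim a b : Fin m₁ ⊕ Fin m₂ → ℝ)) :
    let η : ℝ → ℕ := fun c =>
      (Finset.univ.filter fun i => c < a i).card +
        (Finset.univ.filter fun j => c < b j).card
    let sgnγ : ℤ := if 0 < γ then 1 else -1
    let π : Fin m₁ → ℤ := fun i => (1 - (-1) ^ η (a i) * sgnγ) / 2
    let κ : Fin m₂ → ℤ := fun j => (1 + (-1) ^ η (b j) * sgnγ) / 2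
    (∀ i : Fin m₁, (π i = 1 ↔
        ∃ L : ℝ, L < 0 ∧
          Tendsto (fun x : ℝ => γ * (∏ i', (x - a i')) / ((x - a i) * ∏ j, (x - b j)))
            (nhdsWithin (a i) {a i}ᶜ) (nhds L))) ∧
    (∀ j : Fin m₂, (κ j = 1 ↔
        ∃ L : ℝ, 0 < L ∧
          Tendsto (fun x : ℝ => (x - b j) * (γ * (∏ i, (x - a i)) / ∏ j', (x - b j')))
            (nhdsWithin (b j) {b j}ᶜ) (nhds L))) ∧
    IsNevanlinna (fun z : ℂ =>
      (γ : ℂ) * (∏ i, (z - (a i : ℂ)) ^ (1 - 2 * π i)) /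
        ∏ j, (z - (b j : ℂ)) ^ (1 - 2 * κ j)) ∧
    (∀ x : ℝ, 0 ≤ (∏ i, (x - a i) ^ (2 * π i)) / ∏ j, (x - b j) ^ (2 * κ j)) ∧
    (∀ z : ℂ, z.im ≠ 0 →
      (γ : ℂ) * (∏ i, (z - (a i : ℂ))) / (∏ j, (z - (b j : ℂ))) =
        ((∏ i, (z - (a i : ℂ)) ^ (2 * π i)) / ∏ j, (z - (b j : ℂ)) ^ (2 * κ j)) *
          ((γ : ℂ) * (∏ i, (z - (a i : ℂ)) ^ (1 - 2 * π i)) /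
            ∏ j, (z - (b j : ℂ)) ^ (1 - 2 * κ j))) := by
  intro η sgnγ π κ
  have hσ : IsUnit sgnγ := by unfold sgnγ; split_ifs <;> simp
  have hσγ : 0 < (sgnγ : ℝ) * γ := by
    unfold sgnγ; split_ifs with h
    · simpa using h
    · simpa using lt_of_le_of_ne (not_lt.1 h) hγ
  have haa : ∀ i i', i' ≠ i → a i' ≠ a i := fun i i' h => hdistinct.ne (Sum.inl_injective.ne h)
  have hab : ∀ i j, a i ≠ b j := fun i j => hdistinct.ne Sum.inl_ne_inr
  have hbb : ∀ j j', j' ≠ j → b j' ≠ b j := fun j j' h => hdistinct.ne (Sum.inr_injective.ne h)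
  refine ⟨fun i => one_sub_ediv_two_eq_one_iff_exists_neg_tendsto hσ hσγ a b i (haa i)
      (fun j => (hab i j).symm),
    fun j => one_add_ediv_two_eq_one_iff_exists_pos_tendsto hσ hσγ a b j (hab · j) (hbb j),
    ?_, fun x => ?_, fun z _ => mul_prod_div_prod_eq_mul_zpow ..⟩
  · have hη : ∀ c, η c = #{l | c < Sum.elim a b l} := fun c => by
      rw [Fintype.card_filter_sum_type]; rfl
    have hπ : ∀ i, 1 - 2 * π i = (-1) ^ #{l | Sum.elim a b (.inl i) < Sum.elim a b l} * sgnγ :=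
      fun i => by
        rw [Sum.elim_inl, ← hη]
        exact Int.one_sub_two_mul_one_sub_ediv_two ((isUnit_neg_one.pow _).mul hσ)
    have hκ : ∀ j, 1 - 2 * κ j = -((-1) ^ #{l | Sum.elim a b (.inr j) < Sum.elim a b l} * sgnγ) :=
      fun j => by
        rw [Sum.elim_inr, ← hη]
        exact Int.one_sub_two_mul_one_add_ediv_two ((isUnit_neg_one.pow _).mul hσ)
    convert isNevanlinna_ofReal_mul_prod_sub_zpow hdistinct hσ hσγ.le using 2 with z
    rw [Fintype.prod_sum_type]
    simp only [hπ, hκ, zpow_neg, prod_inv_distrib, div_inv_eq_mul, mul_assoc]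
    rfl
  · exact div_nonneg (prod_nonneg fun i _ => Even.zpow_nonneg (even_two_mul _) _)
      (prod_nonneg fun j _ => Even.zpow_nonneg (even_two_mul _) _)
end
end

section
/- Let s be a simple symmetric rational function of degree n ≥ 1 whose zeros and poles are all real, of order one, and interlacing (between any two consecutive zeros there is exactly one pole and vice versa when ordered on ℝ). Then s admits a factorization s = ∏_{i=1}^n s_i where each s_i is a rational function of degree one with real coefficients, such that the closed sets D_i⁻ := closure of {x ∈ ℝ : s_i(x) ≤ 0} are pairwise disjoint: D_i⁻ ∩ D_j⁻ = ∅ for i ≠ j. -/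
open MeasureTheory Filter Set Topology

noncomputable section

/-! Sort zeros and poles. Interlacing makes them alternate, and passing from `s` to `1 / s` swaps
zeros and poles without changing any set `Dᵢ⁻`, so we may assume that the leftmost point is a zero.
A factor `(z - u) / (z - v)` has `Dᵢ⁻ = [u, v]`, so it remains to pair up adjacent points and to
place `γ`. If `γ > 0`, pair the points off from the right; with an odd number of points the
leftmost zero `a` is left over and goes into `γ (z - a)`, whose set is `(-∞, a]`. If `γ < 0`, the
factor carrying `γ` joins the rightmost point to the leftmost one (or to `∞`), so its set is the
complement of an open interval containing the segments of all the other pairs. -/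

lemma closure_eq_of_subset_of_subset {X : Type*} [TopologicalSpace X] {T S C : Set X}
    (hTS : T ⊆ S) (hSC : S ⊆ C) (hC : IsClosed C) (hT : closure T = C) : closure S = C :=
  (closure_minimal hSC hC).antisymm (hT ▸ closure_mono hTS)

section OrderedField

variable {K : Type*} [Field K] [LinearOrder K] [IsStrictOrderedRing K]

lemma sub_mul_sub_nonpos_iff_mem_uIcc {a b x : K} : (x - a) * (x - b) ≤ 0 ↔ x ∈ uIcc a b := by
  rcases le_total a b with h | h
  · rw [sub_mul_sub_nonpos_iff x h, uIcc_of_le h, mem_Icc]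
  · rw [mul_comm, sub_mul_sub_nonpos_iff x h, uIcc_of_ge h, mem_Icc]

lemma sub_mul_sub_neg_iff_mem_uIoo {a b x : K} : (x - a) * (x - b) < 0 ↔ x ∈ uIoo a b := by
  rcases le_total a b with h | h
  · rw [sub_mul_sub_neg_iff x h, uIoo_of_le h, mem_Ioo]
  · rw [mul_comm, sub_mul_sub_neg_iff x h, uIoo_of_ge h, mem_Ioo]

lemma div_nonpos_iff_mul_nonpos {c d : K} (hd : d ≠ 0) : c / d ≤ 0 ↔ c * d ≤ 0 := by
  rw [← mul_div_mul_right c d hd, div_le_iff₀ (mul_self_pos.2 hd), zero_mul]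

end OrderedField

section Disjoint

variable {α : Type*} [LinearOrder α]

lemma disjoint_Iic_uIcc {c u v : α} (h : c < min u v) : Disjoint (Iic c) (uIcc u v) :=
  (Iic_disjoint_Ioi le_rfl).mono_right fun _ hx => h.trans_le hx.1

lemma disjoint_Ici_uIcc {c u v : α} (h : max u v < c) : Disjoint (Ici c) (uIcc u v) :=
  (Iio_disjoint_Ici le_rfl).symm.mono_right fun _ hx => hx.2.trans_lt h

lemma disjoint_uIcc_uIcc {a b u v : α} (h : max a b < min u v) :
    Disjoint (uIcc a b) (uIcc u v) :=
  (disjoint_Iic_uIcc h).mono_left fun _ hx => hx.2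

lemma disjoint_compl_uIoo_uIcc {a b u v : α} (h₁ : min a b < min u v) (h₂ : max u v < max a b) :
    Disjoint (uIoo a b)ᶜ (uIcc u v) :=
  disjoint_compl_left_iff_subset.2 (Icc_subset_Ioo h₁ h₂)

end Disjoint

-- The set `Dᵢ⁻` of the factor `sFun γ ao bo`.
def nonposClosure (γ : ℝ) (ao bo : Option ℝ) : Set ℝ :=
  closure {x : ℝ | sFiniteAt bo x ∧ sFunR γ ao bo x ≤ 0}

lemma sFiniteAt_some {b x : ℝ} : sFiniteAt (some b) x ↔ x ≠ b :=
  ⟨fun h => h b rfl, fun h _ hp => Option.some_inj.mp hp ▸ h⟩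

lemma sFiniteAt_none (x : ℝ) : sFiniteAt none x := fun _ hp => nomatch hp

lemma sFunR_some_some_nonpos_iff {γ a b x : ℝ} (hxb : x ≠ b) :
    sFunR γ (some a) (some b) x ≤ 0 ↔ γ * ((x - a) * (x - b)) ≤ 0 := by
  rw [sFunR, linR, linR, div_nonpos_iff_mul_nonpos (sub_ne_zero.2 hxb), mul_assoc]

lemma sFunR_none_some_nonpos_iff {γ b x : ℝ} (hxb : x ≠ b) :
    sFunR γ none (some b) x ≤ 0 ↔ γ * (x - b) ≤ 0 := by
  rw [sFunR, linR, linR, div_nonpos_iff_mul_nonpos (sub_ne_zero.2 hxb), mul_one]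

lemma nonposClosure_some_some_of_pos {γ a b : ℝ} (hγ : 0 < γ) (hab : a ≠ b) :
    nonposClosure γ (some a) (some b) = uIcc a b := by
  refine closure_eq_of_subset_of_subset (T := uIoo a b) ?_ ?_ isClosed_Icc (closure_uIoo hab)
  · intro x hx
    have hxb : x ≠ b := fun h => right_notMem_uIoo (h ▸ hx)
    refine ⟨sFiniteAt_some.2 hxb, (sFunR_some_some_nonpos_iff hxb).2 ?_⟩
    exact mul_nonpos_of_nonneg_of_nonpos hγ.le (sub_mul_sub_neg_iff_mem_uIoo.2 hx).le
  · rintro x ⟨hxb, hx⟩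
    rw [sFiniteAt_some] at hxb
    rw [sFunR_some_some_nonpos_iff hxb] at hx
    exact sub_mul_sub_nonpos_iff_mem_uIcc.1 (nonpos_of_mul_nonpos_right hx hγ)

lemma nonposClosure_some_some_of_neg {γ a b : ℝ} (hγ : γ < 0) :
    nonposClosure γ (some a) (some b) = (uIoo a b)ᶜ := by
  refine closure_eq_of_subset_of_subset (T := (uIcc a b)ᶜ) ?_ ?_ isOpen_Ioo.isClosed_compl
    (by rw [closure_compl, uIcc, interior_Icc]; rfl)
  · intro x hx
    have hxb : x ≠ b := fun h => hx (h ▸ right_mem_uIcc)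
    refine ⟨sFiniteAt_some.2 hxb, (sFunR_some_some_nonpos_iff hxb).2 ?_⟩
    exact mul_nonpos_of_nonpos_of_nonneg hγ.le
      (not_le.1 (mt sub_mul_sub_nonpos_iff_mem_uIcc.1 hx)).le
  · rintro x ⟨hxb, hx⟩ hx'
    rw [sFiniteAt_some] at hxb
    rw [sFunR_some_some_nonpos_iff hxb] at hx
    exact (sub_mul_sub_neg_iff_mem_uIoo.2 hx').not_ge (nonneg_of_mul_nonpos_right hx hγ)

lemma nonposClosure_some_none_of_pos {γ a : ℝ} (hγ : 0 < γ) :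
    nonposClosure γ (some a) none = Iic a := by
  have : {x | sFiniteAt none x ∧ sFunR γ (some a) none x ≤ 0} = Iic a := by
    ext x
    simp only [mem_ofPred_eq, sFiniteAt_none, sFunR, linR, div_one, true_and, mem_Iic]
    constructor <;> intro h <;> nlinarith
  rw [nonposClosure, this, closure_Iic]

lemma nonposClosure_some_none_of_neg {γ a : ℝ} (hγ : γ < 0) :
    nonposClosure γ (some a) none = Ici a := by
  have : {x | sFiniteAt none x ∧ sFunR γ (some a) none x ≤ 0} = Ici a := by
    ext x
    simp only [mem_ofPred_eq, sFiniteAt_none, sFunR, linR, div_one, true_and, mem_Ici]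
    constructor <;> intro h <;> nlinarith
  rw [nonposClosure, this, closure_Ici]

lemma nonposClosure_none_some_of_pos {γ b : ℝ} (hγ : 0 < γ) :
    nonposClosure γ none (some b) = Iic b := by
  have : {x | sFiniteAt (some b) x ∧ sFunR γ none (some b) x ≤ 0} = Iio b := by
    ext x
    simp only [mem_ofPred_eq, sFiniteAt_some, mem_Iio]
    refine ⟨fun ⟨hxb, h⟩ => ?_, fun h => ⟨h.ne, ?_⟩⟩
    · rw [sFunR_none_some_nonpos_iff hxb] at h
      exact lt_of_le_of_ne (by nlinarith) hxb
    · rw [sFunR_none_some_nonpos_iff h.ne]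
      nlinarith
  rw [nonposClosure, this, closure_Iio]

lemma nonposClosure_none_some_of_neg {γ b : ℝ} (hγ : γ < 0) :
    nonposClosure γ none (some b) = Ici b := by
  have : {x | sFiniteAt (some b) x ∧ sFunR γ none (some b) x ≤ 0} = Ioi b := by
    ext x
    simp only [mem_ofPred_eq, sFiniteAt_some, mem_Ioi]
    refine ⟨fun ⟨hxb, h⟩ => ?_, fun h => ⟨h.ne', ?_⟩⟩
    · rw [sFunR_none_some_nonpos_iff hxb] at h
      exact lt_of_le_of_ne (by nlinarith) hxb.symm
    · rw [sFunR_none_some_nonpos_iff h.ne']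
      nlinarith
  rw [nonposClosure, this, closure_Ioi]

lemma nonposClosure_inv_swap {γ : ℝ} {ao bo : Option ℝ} (hγ : γ ≠ 0)
    (hnone : ¬ (ao = none ∧ bo = none)) (hne : ao ≠ bo) :
    nonposClosure γ⁻¹ bo ao = nonposClosure γ ao bo := by
  rcases ao with _ | a <;> rcases bo with _ | b
  · exact absurd ⟨rfl, rfl⟩ hnone
  all_goals rcases hγ.lt_or_gt with hγ' | hγ'
  · rw [nonposClosure_some_none_of_neg (inv_lt_zero.2 hγ'), nonposClosure_none_some_of_neg hγ']
  · rw [nonposClosure_some_none_of_pos (inv_pos.2 hγ'), nonposClosure_none_some_of_pos hγ']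
  · rw [nonposClosure_none_some_of_neg (inv_lt_zero.2 hγ'), nonposClosure_some_none_of_neg hγ']
  · rw [nonposClosure_none_some_of_pos (inv_pos.2 hγ'), nonposClosure_some_none_of_pos hγ']
  · rw [nonposClosure_some_some_of_neg (inv_lt_zero.2 hγ'), nonposClosure_some_some_of_neg hγ',
      uIoo_comm]
  · have hab : a ≠ b := fun h => hne (congrArg some h)
    rw [nonposClosure_some_some_of_pos (inv_pos.2 hγ') hab.symm,
      nonposClosure_some_some_of_pos hγ' hab, uIcc_comm]

lemma sFun_inv_swap (γ : ℝ) (ao bo : Option ℝ) (z : ℂ) :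
    sFun γ⁻¹ bo ao z = (sFun γ ao bo z)⁻¹ := by
  simp only [sFun, div_eq_mul_inv, mul_inv, inv_inv, Complex.ofReal_inv]
  ring

structure IsDisjointFactorization (s : ℂ → ℂ) {n : ℕ} (γs : Fin n → ℝ)
    (aos bos : Fin n → Option ℝ) : Prop where
  ne_zero : ∀ i, γs i ≠ 0
  not_none : ∀ i, ¬ (aos i = none ∧ bos i = none)
  zero_ne_pole : ∀ i, aos i ≠ bos i
  eq_prod : ∀ z : ℂ, z.im ≠ 0 → s z = ∏ i, sFun (γs i) (aos i) (bos i) z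
  pairwise_disjoint : Pairwise fun i j =>
    Disjoint (nonposClosure (γs i) (aos i) (bos i)) (nonposClosure (γs j) (aos j) (bos j))

namespace IsDisjointFactorization

variable {s g : ℂ → ℂ} {n : ℕ} {γs : Fin n → ℝ} {aos bos : Fin n → Option ℝ}

theorem cons (h : IsDisjointFactorization g γs aos bos) {γ : ℝ} {ao bo : Option ℝ}
    (hγ : γ ≠ 0) (hnone : ¬ (ao = none ∧ bo = none)) (hne : ao ≠ bo)
    (hdisj : ∀ i, Disjoint (nonposClosure γ ao bo) (nonposClosure (γs i) (aos i) (bos i)))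
    (hs : ∀ z : ℂ, z.im ≠ 0 → s z = sFun γ ao bo z * g z) :
    IsDisjointFactorization s (Fin.cons γ γs) (Fin.cons ao aos) (Fin.cons bo bos) where
  ne_zero := Fin.cases hγ h.ne_zero
  not_none := Fin.cases hnone h.not_none
  zero_ne_pole := Fin.cases hne h.zero_ne_pole
  eq_prod z hz := by
    simp only [Fin.prod_univ_succ, Fin.cons_zero, Fin.cons_succ, hs z hz, h.eq_prod z hz]
  pairwise_disjoint := by
    intro i j hij
    induction i using Fin.cases <;> induction j using Fin.cases
    · exact absurd rfl hij
    · exact hdisj _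
    · exact (hdisj _).symm
    · exact h.pairwise_disjoint (fun h' => hij (congrArg Fin.succ h'))

theorem inv_swap (h : IsDisjointFactorization s γs aos bos) :
    IsDisjointFactorization (fun z => (s z)⁻¹) (fun i => (γs i)⁻¹) bos aos where
  ne_zero i := inv_ne_zero (h.ne_zero i)
  not_none i := (h.not_none i).imp And.symm
  zero_ne_pole i := (h.zero_ne_pole i).symm
  eq_prod z hz := by simp only [sFun_inv_swap, Finset.prod_inv_distrib, h.eq_prod z hz]
  pairwise_disjoint i j hij := by
    simp only [nonposClosure_inv_swap (h.ne_zero _) (h.not_none _) (h.zero_ne_pole _)]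
    exact h.pairwise_disjoint hij

end IsDisjointFactorization

theorem isDisjointFactorization_chain {m : ℕ} (x y : Fin m → ℝ) (hxy : ∀ i, x i ≠ y i)
    (hsep : ∀ i j, i < j → max (x i) (y i) < min (x j) (y j)) :
    IsDisjointFactorization (fun z => (∏ i, (z - x i)) / ∏ i, (z - y i)) (fun _ => 1)
      (fun i => some (x i)) (fun i => some (y i)) where
  ne_zero _ := one_ne_zero
  not_none _ := by simp
  zero_ne_pole i := by simpa using hxy i
  eq_prod z _ := by simp [sFun, linC, Finset.prod_div_distrib]
  pairwise_disjoint i j hij := by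
    simp only [nonposClosure_some_some_of_pos one_pos (hxy _)]
    rcases hij.lt_or_gt with h | h
    exacts [disjoint_uIcc_uIcc (hsep i j h), (disjoint_uIcc_uIcc (hsep j i h)).symm]

def HasDisjointFactorization (s : ℂ → ℂ) (n : ℕ) : Prop :=
  ∃ (γs : Fin n → ℝ) (aos bos : Fin n → Option ℝ), IsDisjointFactorization s γs aos bos

theorem HasDisjointFactorization.of_inv {s t : ℂ → ℂ} {n : ℕ}
    (h : HasDisjointFactorization s n) (hts : ∀ z : ℂ, t z = (s z)⁻¹) :
    HasDisjointFactorization t n :=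
  let ⟨_, _, _, h⟩ := h
  ⟨_, _, _, by simpa only [← hts] using h.inv_swap⟩

theorem hasDisjointFactorization_cons_chain {s : ℂ → ℂ} {γ : ℝ} {ao bo : Option ℝ} {m : ℕ}
    (hγ : γ ≠ 0) (hnone : ¬ (ao = none ∧ bo = none)) (hne : ao ≠ bo) (x y : Fin m → ℝ)
    (hxy : ∀ i, x i ≠ y i) (hsep : ∀ i j, i < j → max (x i) (y i) < min (x j) (y j))
    (hdisj : ∀ i, Disjoint (nonposClosure γ ao bo) (uIcc (x i) (y i)))
    (hs : ∀ z : ℂ, s z = sFun γ ao bo z * ((∏ i, (z - x i)) / ∏ i, (z - y i))) :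
    HasDisjointFactorization s (m + 1) :=
  ⟨_, _, _, (isDisjointFactorization_chain x y hxy hsep).cons hγ hnone hne
    (fun i => by rw [nonposClosure_some_some_of_pos one_pos (hxy i)]; exact hdisj i)
    (fun z _ => hs z)⟩

section Interlacing

variable {p q : ℕ} {A : Fin (p + 1) → ℝ} {B : Fin q → ℝ}

theorem val_le_of_lt_of_interlacing (hA : StrictMono A) (hB : StrictMono B)
    (h₁ : ∀ i i', A i < A i' → ∃ j, A i < B j ∧ B j < A i') {i : Fin (p + 1)} {j : Fin q}
    (hij : A i < B j) : (i : ℕ) ≤ j := by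
  cases q with
  | zero => exact j.elim0
  | succ q =>
  induction j using Fin.induction generalizing i with
  | zero =>
    by_contra hi0
    obtain ⟨k, -, hk⟩ := h₁ 0 i (hA (Fin.pos_iff_ne_zero.2 (by simpa using hi0)))
    exact (hB.monotone (Fin.zero_le k)).not_gt (hk.trans hij)
  | succ j ih =>
    by_contra hji
    rw [not_le, Fin.val_succ] at hji
    have hj : (j : ℕ) + 1 < p + 1 := by omega
    obtain ⟨k, hk, hki⟩ := h₁ ⟨j + 1, hj⟩ i (hA (by rw [Fin.lt_def]; exact hji))
    have hkj : k ≤ j.castSucc := by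
      have := hB.lt_iff_lt.1 (hki.trans hij)
      rw [Fin.lt_def, Fin.val_succ] at this
      rw [Fin.le_def, Fin.val_castSucc]
      omega
    have := ih (hk.trans_le (hB.monotone hkj))
    simp at this

theorem lt_of_val_le_of_interlacing (hA : StrictMono A) (hB : StrictMono B)
    (hAB : ∀ i j, A i ≠ B j) (h₂ : ∀ j j', B j < B j' → ∃ i, B j < A i ∧ A i < B j')
    (h₀ : ∀ j, ∃ i, A i < B j) {i : Fin (p + 1)} {j : Fin q} (hij : (i : ℕ) ≤ j) :
    A i < B j := by
  cases q with
  | zero => exact j.elim0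
  | succ q =>
  induction j using Fin.induction generalizing i with
  | zero =>
    obtain rfl : i = 0 := Fin.ext (by simpa using hij)
    obtain ⟨i', hi'⟩ := h₀ 0
    exact (hA.monotone (Fin.zero_le i')).trans_lt hi'
  | succ j ih =>
    by_contra hji
    obtain ⟨i', hi', hi'j⟩ := h₂ j.castSucc j.succ (hB Fin.castSucc_lt_succ)
    have hii' := hA.lt_iff_lt.1 (hi'j.trans (lt_of_le_of_ne (not_lt.1 hji) (hAB i _).symm))
    rw [Fin.lt_def] at hii'
    rw [Fin.val_succ] at hij
    exact (hi'.trans (ih (by rw [Fin.val_castSucc]; omega))).false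

theorem card_eq_succ_or_eq_of_interlacing (hA : StrictMono A) (hB : StrictMono B)
    (h₁ : ∀ i i', A i < A i' → ∃ j, A i < B j ∧ B j < A i')
    (h₂ : ∀ j j', B j < B j' → ∃ i, B j < A i ∧ A i < B j')
    (hAB : ∀ i j, A i < B j ↔ (i : ℕ) ≤ j) : q = p + 1 ∨ q = p := by
  have h_le : q ≤ p + 1 := by
    by_contra! h
    obtain ⟨i, hi, -⟩ := h₂ ⟨p, by omega⟩ ⟨p + 1, by omega⟩ (hB (by simp [Fin.lt_def]))
    exact hi.not_gt ((hAB i _).2 (by simp only; omega))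
  have h_ge : p ≤ q := by
    by_contra! h
    obtain ⟨j, hj, -⟩ := h₁ ⟨q, by omega⟩ ⟨q + 1, by omega⟩ (hA (by simp [Fin.lt_def]))
    have := (hAB _ _).1 hj
    simp only at this
    omega
  omega

end Interlacing

theorem gt_iff_val_lt_of_lt_iff_val_le {m n : ℕ} {A : Fin m → ℝ} {B : Fin n → ℝ}
    (hAB : ∀ i j, A i ≠ B j) (h : ∀ i j, A i < B j ↔ (i : ℕ) ≤ j) (i : Fin m) (j : Fin n) :
    B j < A i ↔ (j : ℕ) < i := by
  rw [← not_le, (hAB i j).le_iff_lt, h, not_le]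

section Patterns

variable {γ : ℝ} {m : ℕ}

section ZeroPole

variable {A B : Fin (m + 1) → ℝ} (hA : StrictMono A) (hB : StrictMono B)
  (hAB : ∀ i j, A i < B j ↔ (i : ℕ) ≤ j) (hBA : ∀ i j, B j < A i ↔ (j : ℕ) < i)
include hA hB hAB hBA

theorem hasDisjointFactorization_zero_pole_of_neg (hγ : γ < 0) :
    HasDisjointFactorization (fun z => γ * (∏ i, (z - A i)) / ∏ j, (z - B j)) (m + 1) := by
  refine hasDisjointFactorization_cons_chain (ao := some (A 0)) (bo := some (B (Fin.last m)))
    hγ.ne (by simp) ?_ (fun j => A j.succ) (fun j => B j.castSucc) ?_ ?_ ?_ ?_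
  · rw [ne_eq, Option.some_inj, ← ne_eq, ne_iff_lt_or_gt, hAB]; simp
  · intro j; rw [ne_iff_lt_or_gt, hBA]; simp
  · intro j k hjk
    simp only [max_lt_iff, lt_min_iff, hA.lt_iff_lt, hB.lt_iff_lt, hAB, hBA, Fin.lt_def,
      Fin.val_succ, Fin.val_castSucc] at hjk ⊢
    omega
  · intro j
    rw [nonposClosure_some_some_of_neg hγ]
    apply disjoint_compl_uIoo_uIcc
    all_goals simp only [max_lt_iff, lt_min_iff, min_lt_iff, lt_max_iff, hA.lt_iff_lt,
      hB.lt_iff_lt, hAB, hBA, Fin.lt_def, Fin.val_succ, Fin.val_castSucc, Fin.val_zero,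
      Fin.val_last]; omega
  · intro z
    rw [Fin.prod_univ_succ, Fin.prod_univ_castSucc]
    simp only [sFun, linC, div_eq_mul_inv, mul_inv]
    ring

theorem hasDisjointFactorization_zero_pole_of_pos (hγ : 0 < γ) :
    HasDisjointFactorization (fun z => γ * (∏ i, (z - A i)) / ∏ j, (z - B j)) (m + 1) := by
  refine hasDisjointFactorization_cons_chain (ao := some (A 0)) (bo := some (B 0))
    hγ.ne' (by simp) ?_ (fun j => A j.succ) (fun j => B j.succ) ?_ ?_ ?_ ?_
  · rw [ne_eq, Option.some_inj, ← ne_eq, ne_iff_lt_or_gt, hAB]; simp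
  · intro j; rw [ne_iff_lt_or_gt, hAB]; simp
  · intro j k hjk
    simp only [max_lt_iff, lt_min_iff, hA.lt_iff_lt, hB.lt_iff_lt, hAB, hBA, Fin.lt_def,
      Fin.val_succ] at hjk ⊢
    omega
  · intro j
    rw [nonposClosure_some_some_of_pos hγ (by rw [ne_iff_lt_or_gt, hAB]; simp)]
    apply disjoint_uIcc_uIcc
    simp only [max_lt_iff, lt_min_iff, hA.lt_iff_lt, hB.lt_iff_lt, hAB, hBA, Fin.lt_def,
      Fin.val_succ, Fin.val_zero]
    omega
  · intro z
    rw [Fin.prod_univ_succ, Fin.prod_univ_succ]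
    simp only [sFun, linC, div_eq_mul_inv, mul_inv]
    ring

end ZeroPole

section ZeroZero

variable {A : Fin (m + 1) → ℝ} {B : Fin m → ℝ} (hA : StrictMono A) (hB : StrictMono B)
  (hAB : ∀ i j, A i < B j ↔ (i : ℕ) ≤ j) (hBA : ∀ i j, B j < A i ↔ (j : ℕ) < i)
include hA hB hAB hBA

theorem hasDisjointFactorization_zero_zero_of_neg (hγ : γ < 0) :
    HasDisjointFactorization (fun z => γ * (∏ i, (z - A i)) / ∏ j, (z - B j)) (m + 1) := by
  refine hasDisjointFactorization_cons_chain (ao := some (A (Fin.last m))) (bo := none)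
    hγ.ne (by simp) (by simp) (fun j => A j.castSucc) B ?_ ?_ ?_ ?_
  · intro j; rw [ne_iff_lt_or_gt, hAB]; simp
  · intro j k hjk
    simp only [max_lt_iff, lt_min_iff, hA.lt_iff_lt, hB.lt_iff_lt, hAB, hBA, Fin.lt_def,
      Fin.val_castSucc] at hjk ⊢
    omega
  · intro j
    rw [nonposClosure_some_none_of_neg hγ]
    apply disjoint_Ici_uIcc
    simp only [max_lt_iff, hA.lt_iff_lt, hBA, Fin.lt_def, Fin.val_castSucc, Fin.val_last]
    omega
  · intro z
    rw [Fin.prod_univ_castSucc]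
    simp only [sFun, linC, div_eq_mul_inv]
    ring

theorem hasDisjointFactorization_zero_zero_of_pos (hγ : 0 < γ) :
    HasDisjointFactorization (fun z => γ * (∏ i, (z - A i)) / ∏ j, (z - B j)) (m + 1) := by
  refine hasDisjointFactorization_cons_chain (ao := some (A 0)) (bo := none)
    hγ.ne' (by simp) (by simp) (fun j => A j.succ) B ?_ ?_ ?_ ?_
  · intro j; rw [ne_iff_lt_or_gt, hBA]; simp
  · intro j k hjk
    simp only [max_lt_iff, lt_min_iff, hA.lt_iff_lt, hB.lt_iff_lt, hAB, hBA, Fin.lt_def,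
      Fin.val_succ] at hjk ⊢
    omega
  · intro j
    rw [nonposClosure_some_none_of_pos hγ]
    apply disjoint_Iic_uIcc
    simp only [lt_min_iff, hA.lt_iff_lt, hAB, Fin.lt_def, Fin.val_succ, Fin.val_zero]
    omega
  · intro z
    rw [Fin.prod_univ_succ]
    simp only [sFun, linC, div_eq_mul_inv]
    ring

end ZeroZero

end Patterns

theorem hasDisjointFactorization_of_strictMono {p q : ℕ} {γ : ℝ} (hγ : γ ≠ 0) {A : Fin p → ℝ}
    {B : Fin q → ℝ} (hA : StrictMono A) (hB : StrictMono B) (hAB : ∀ i j, A i ≠ B j)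
    (h₁ : ∀ i i', A i < A i' → ∃ j, A i < B j ∧ B j < A i')
    (h₂ : ∀ j j', B j < B j' → ∃ i, B j < A i ∧ A i < B j') (hn : 1 ≤ max p q) :
    HasDisjointFactorization (fun z => γ * (∏ i, (z - A i)) / ∏ j, (z - B j)) (max p q) := by
  wlog h₀ : ∀ j, ∃ i, A i < B j generalizing γ p q A B with H
  · push Not at h₀
    obtain ⟨j₀, hj₀⟩ := h₀
    rw [max_comm]
    refine (H (inv_ne_zero hγ) hB hA (fun j i => (hAB i j).symm) h₂ h₁ (max_comm p q ▸ hn)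
      fun i => ⟨j₀, (hj₀ i).lt_of_ne (hAB i j₀).symm⟩).of_inv fun z => ?_
    simp only [div_eq_mul_inv, mul_inv, inv_inv, Complex.ofReal_inv]
    ring
  obtain ⟨p, rfl⟩ : ∃ p', p = p' + 1 := by
    rcases p with _ | p
    · rcases q with _ | q
      · simp at hn
      · exact (h₀ 0).elim fun i _ => i.elim0
    · exact ⟨p, rfl⟩
  have hchar : ∀ i j, A i < B j ↔ (i : ℕ) ≤ j := fun i j =>
    ⟨val_le_of_lt_of_interlacing hA hB h₁, lt_of_val_le_of_interlacing hA hB hAB h₂ h₀⟩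
  have hchar' := gt_iff_val_lt_of_lt_iff_val_le hAB hchar
  rcases card_eq_succ_or_eq_of_interlacing hA hB h₁ h₂ hchar with rfl | rfl <;>
    rcases hγ.lt_or_gt with hγ' | hγ'
  · rw [max_self]
    exact hasDisjointFactorization_zero_pole_of_neg hA hB hchar hchar' hγ'
  · rw [max_self]
    exact hasDisjointFactorization_zero_pole_of_pos hA hB hchar hchar' hγ'
  · rw [max_eq_left (Nat.le_succ _)]
    exact hasDisjointFactorization_zero_zero_of_neg hA hB hchar hchar' hγ'
  · rw [max_eq_left (Nat.le_succ _)]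
    exact hasDisjointFactorization_zero_zero_of_pos hA hB hchar hchar' hγ'

lemma exists_perm_strictMono {l : ℕ} {a : Fin l → ℝ} (ha : Function.Injective a) :
    ∃ σ : Equiv.Perm (Fin l), StrictMono (a ∘ σ) :=
  ⟨Tuple.sort a, (Tuple.monotone_sort a).strictMono_of_injective
    (ha.comp (Tuple.sort a).injective)⟩

/-- a simple symmetric rational function
`s(z) = γ ∏ (z - aᵢ) / ∏ (z - bⱼ)` of degree `n = max l₁ l₂ ≥ 1` with real, simple and
interlacing zeros and poles admits a factorization `s = ∏ sᵢ` into degree-one real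
rational factors `sᵢ = γᵢ (z - aᵢ')/(z - bᵢ')` (zeros/poles in `ℝ ∪ {∞}`) such that the
closed sets `Dᵢ⁻ = clos {x ∈ ℝ : sᵢ(x) ≤ 0}` are pairwise disjoint. -/
theorem statement14 (γ : ℝ) (hγ : γ ≠ 0) (l₁ l₂ : ℕ)
    (a : Fin l₁ → ℝ) (b : Fin l₂ → ℝ)
    (ha : Function.Injective a) (hb : Function.Injective b)
    (hab : ∀ i j, a i ≠ b j)
    (hint₁ : ∀ i i' : Fin l₁, a i < a i' → ∃ j, a i < b j ∧ b j < a i')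
    (hint₂ : ∀ j j' : Fin l₂, b j < b j' → ∃ i, b j < a i ∧ a i < b j')
    (hn : 1 ≤ max l₁ l₂) :
    ∃ (γs : Fin (max l₁ l₂) → ℝ) (aos bos : Fin (max l₁ l₂) → Option ℝ),
      (∀ i, γs i ≠ 0) ∧
      (∀ i, ¬ (aos i = none ∧ bos i = none)) ∧
      (∀ i, aos i ≠ bos i) ∧
      (∀ z : ℂ, z.im ≠ 0 →
        (γ : ℂ) * (∏ i, (z - (a i : ℂ))) / (∏ j, (z - (b j : ℂ))) =
          ∏ i, sFun (γs i) (aos i) (bos i) z) ∧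
      (∀ i j, i ≠ j →
        closure {x : ℝ | sFiniteAt (bos i) x ∧ sFunR (γs i) (aos i) (bos i) x ≤ 0} ∩
          closure {x : ℝ | sFiniteAt (bos j) x ∧ sFunR (γs j) (aos j) (bos j) x ≤ 0} =
            ∅) := by
  obtain ⟨σ, hσ⟩ := exists_perm_strictMono ha
  obtain ⟨τ, hτ⟩ := exists_perm_strictMono hb
  obtain ⟨γs, aos, bos, h⟩ := hasDisjointFactorization_of_strictMono hγ hσ hτ
    (fun i j => hab _ _)
    (fun i i' hi => let ⟨j, hj⟩ := hint₁ _ _ hi; ⟨τ.symm j, by simpa using hj⟩)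
    (fun j j' hj => let ⟨i, hi⟩ := hint₂ _ _ hj; ⟨σ.symm i, by simpa using hi⟩) hn
  refine ⟨γs, aos, bos, h.ne_zero, h.not_none, h.zero_ne_pole, fun z hz => ?_,
    fun i j hij => disjoint_iff_inter_eq_empty.1 (h.pairwise_disjoint hij)⟩
  rw [← Equiv.prod_comp σ, ← Equiv.prod_comp τ]
  exact h.eq_prod z hz
end
end
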